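/- There exists a constant C₀ < ∞ such that for every N ≥ 2, every α ∈ {1,2}, every m ≥ 1 and every k ∈ 𝕋², ∫_{𝕋²} Pᵐ(k,dk') ∫_0^∞ e^{-z} z |ψ^α(k')| 𝟙{z|ψ^α(k')| > √N} dz ≤ C₀/√N; equivalently, for the Markov chain (X_n) with i.i.d. mean-one exponential times (e_n) independent of the chain, E[e_n|ψ^α(X_n)| 𝟙{e_n|ψ^α(X_n)| > √N}] ≤ C₀/√N for all n ≥ 1. -/

import Mathlib

open MeasureTheory Real Filter Set
open scoped ENNReal NNReal

noncomputable section

instance : Fact ((0:ℝ) < 1) := ⟨one_pos⟩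

/-- The one-dimensional torus `ℝ/ℤ`. -/
abbrev Torus := AddCircle (1 : ℝ)

/-- The two-dimensional torus `𝕋²`. -/
abbrev T2 := Torus × Torus

lemma sin_sq_periodic : Function.Periodic (fun x : ℝ => Real.sin (π * x) ^ 2) 1 := by
  intro x
  simp only []
  have h : π * (x + 1) = π * x + π := by ring
  rw [h, Real.sin_add_pi]
  ring

lemma sincos_periodic :
    Function.Periodic (fun x : ℝ => Real.sin (π * x) * Real.cos (π * x)) 1 := by
  intro x
  simp only []
  have h : π * (x + 1) = π * x + π := by ring
  rw [h, Real.sin_add_pi, Real.cos_add_pi]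
  ring

/-- `sin²(π k)` as a function on the circle. -/
def sin2 : Torus → ℝ := sin_sq_periodic.lift

/-- `sin(π k) cos(π k)` as a function on the circle. -/
def sincos : Torus → ℝ := sincos_periodic.lift

/-- The components of a point of the torus. -/
def tcomp (k : T2) : Fin 2 → Torus := ![k.1, k.2]

/-- `Φ(k) = 8 ∑_α sin²(π k_α)`. -/
def Phi (k : T2) : ℝ := 8 * (sin2 k.1 + sin2 k.2)

/-- The scattering kernel `R(k,k') = 16 ∑_α sin²(π k_α) sin²(π k'_α)`. -/
def Rker (k k' : T2) : ℝ := 16 * (sin2 k.1 * sin2 k'.1 + sin2 k.2 * sin2 k'.2)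

/-- The velocity `v_α(k) = sin(π k_α) cos(π k_α) / (∑_β sin²(π k_β))^{1/2}`. -/
def vel (α : Fin 2) (k : T2) : ℝ :=
  sincos (tcomp k α) / Real.sqrt (sin2 k.1 + sin2 k.2)

/-- `ψ(k) = Φ(k)⁻¹ v(k)`. -/
def psiC (α : Fin 2) (k : T2) : ℝ := vel α k / Phi k

/-- The Markov transition kernel `P(k,dk') = Φ(k)⁻¹ R(k,k') dk'` on `𝕋²`. -/
def Pker (k : T2) : Measure T2 :=
  (volume : Measure T2).withDensity fun k' => ENNReal.ofReal ((Phi k)⁻¹ * Rker k k')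

/-- The `m`-step kernel (`Pn 0 k` is the Dirac mass at `k`). -/
def Pn : ℕ → T2 → Measure T2
  | 0, k => Measure.dirac k
  | (m + 1), k => (Pn m k).bind Pker

/-- The measure `π(dk) = (1/8) Φ(k) dk`. -/
def piM : Measure T2 :=
  (volume : Measure T2).withDensity fun k => ENNReal.ofReal ((1 / 8) * Phi k)

/-- The exponential distribution with mean one. -/
def expMeasure : Measure ℝ :=
  (volume : Measure ℝ).withDensity fun z =>
    if 0 ≤ z then ENNReal.ofReal (Real.exp (-z)) else 0

/-!
For `m ≥ 1` the law `Pᵐ(k, ·)` is dominated by `2π`: the kernel `Pᵐ⁻¹(k, ·)` has mass at most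
one and `R(k, k') ≤ Φ(k) Φ(k') / 4`. A Chernoff bound in `z` controls the inner integral by
`4 |ψ| e^{-√N Φ / 2}`, and `Φ |ψ| ≤ |v| ≤ 1`, so the whole expression is at most
`∫ e^{-√N Φ / 2} dk`. This integral factorises over the two coordinates, and since
`sin²(π x) ≥ 4 x²` on `[-1/2, 1/2]` each factor is at most the Gaussian integral
`√(π / (16 √N))`; hence the bound `π / (16 √N) ≤ 1 / √N`.
-/

theorem MeasureTheory.Measure.bind_le_of_forall_le {α β : Type*} [MeasurableSpace α]
    [MeasurableSpace β] {μ : Measure α} {κ : α → Measure β} {ν : Measure β}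
    (hμ : μ univ ≤ 1) (hκ : ∀ a, κ a ≤ ν) : μ.bind κ ≤ ν := by
  refine Measure.le_iff.mpr fun s hs => ?_
  calc μ.bind κ s ≤ ∫⁻ a, κ a s ∂μ := Measure.bind_apply_le κ hs
    _ ≤ ∫⁻ _, ν s ∂μ := lintegral_mono fun a => hκ a s
    _ = ν s * μ univ := lintegral_const _
    _ ≤ ν s := mul_le_of_le_one_right' hμ

lemma MeasureTheory.Integrable.of_lintegral_ofReal_le {α : Type*} [MeasurableSpace α]
    {μ : Measure α} {f : α → ℝ} (hf : AEStronglyMeasurable f μ) (hf₀ : 0 ≤ᵐ[μ] f) {B : ℝ}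
    (h : ∫⁻ a, ENNReal.ofReal (f a) ∂μ ≤ ENNReal.ofReal B) : Integrable f μ :=
  ⟨hf, (hasFiniteIntegral_iff_ofReal hf₀).mpr (h.trans_lt ENNReal.ofReal_lt_top)⟩

lemma MeasureTheory.integral_le_of_lintegral_ofReal_le {α : Type*} [MeasurableSpace α]
    {μ : Measure α} {f : α → ℝ} (hf : AEStronglyMeasurable f μ) (hf₀ : 0 ≤ᵐ[μ] f) {B : ℝ}
    (hB : 0 ≤ B) (h : ∫⁻ a, ENNReal.ofReal (f a) ∂μ ≤ ENNReal.ofReal B) : ∫ a, f a ∂μ ≤ B := by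
  rw [integral_eq_lintegral_of_nonneg_ae hf₀ hf]
  exact ENNReal.toReal_le_of_le_ofReal hB h

lemma sin2_coe (x : ℝ) : sin2 x = Real.sin (π * x) ^ 2 := rfl

lemma sincos_coe (x : ℝ) : sincos x = Real.sin (π * x) * Real.cos (π * x) := rfl

lemma continuous_sin2 : Continuous sin2 :=
  (by fun_prop : Continuous fun x : ℝ => Real.sin (π * x) ^ 2).quotient_liftOn' _

lemma continuous_sincos : Continuous sincos :=
  (by fun_prop : Continuous fun x : ℝ => Real.sin (π * x) * Real.cos (π * x)).quotient_liftOn' _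

lemma sin2_nonneg (t : Torus) : 0 ≤ sin2 t := by
  induction t using QuotientAddGroup.induction_on with
  | H x => rw [sin2_coe]; positivity

lemma abs_sincos_le_sqrt_sin2 (t : Torus) : |sincos t| ≤ √(sin2 t) := by
  induction t using QuotientAddGroup.induction_on with
  | H x =>
    rw [sincos_coe, sin2_coe, Real.sqrt_sq_eq_abs, abs_mul]
    exact mul_le_of_le_one_right (abs_nonneg _) (Real.abs_cos_le_one _)

lemma continuous_Phi : Continuous Phi := by
  unfold Phi; have := continuous_sin2; fun_prop

lemma Phi_nonneg (k : T2) : 0 ≤ Phi k := by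
  have := sin2_nonneg k.1; have := sin2_nonneg k.2; unfold Phi; positivity

lemma continuous_tcomp (α : Fin 2) : Continuous fun k => tcomp k α := by
  fin_cases α <;> simp only [tcomp] <;> fun_prop

lemma measurable_psiC (α : Fin 2) : Measurable (psiC α) := by
  have := continuous_sin2.measurable; have := continuous_sincos.measurable
  have := (continuous_tcomp α).measurable; have := continuous_Phi.measurable
  unfold psiC vel; fun_prop

lemma abs_vel_le_one (α : Fin 2) (k : T2) : |vel α k| ≤ 1 := by
  have hα : sin2 (tcomp k α) ≤ sin2 k.1 + sin2 k.2 := by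
    fin_cases α <;> simp [tcomp, sin2_nonneg]
  rw [vel, abs_div, abs_of_nonneg (Real.sqrt_nonneg _)]
  exact div_le_one_of_le₀ ((abs_sincos_le_sqrt_sin2 _).trans (Real.sqrt_le_sqrt hα))
    (Real.sqrt_nonneg _)

lemma Phi_mul_abs_psiC_le_one (α : Fin 2) (k : T2) : Phi k * |psiC α k| ≤ 1 := by
  rw [psiC, abs_div, abs_of_nonneg (Phi_nonneg k)]
  rcases (Phi_nonneg k).eq_or_lt with h | h
  · simp [← h]
  · rw [mul_div_cancel₀ _ h.ne']
    exact abs_vel_le_one α k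

lemma Rker_le (k k' : T2) : Rker k k' ≤ Phi k * Phi k' / 4 := by
  have := sin2_nonneg k.1; have := sin2_nonneg k.2
  have := sin2_nonneg k'.1; have := sin2_nonneg k'.2
  unfold Rker Phi; nlinarith [mul_nonneg ‹0 ≤ sin2 k.1› ‹0 ≤ sin2 k'.2›,
    mul_nonneg ‹0 ≤ sin2 k.2› ‹0 ≤ sin2 k'.1›]

lemma Rker_nonneg (k k' : T2) : 0 ≤ Rker k k' := by
  have := sin2_nonneg k.1; have := sin2_nonneg k.2
  have := sin2_nonneg k'.1; have := sin2_nonneg k'.2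
  unfold Rker; positivity

lemma integral_sin2 : ∫ t : Torus, sin2 t = 1 / 2 := by
  rw [← AddCircle.intervalIntegral_preimage 1 0, zero_add]
  simp only [sin2_coe]
  rw [intervalIntegral.integral_comp_mul_left (fun y => Real.sin y ^ 2) Real.pi_ne_zero,
    integral_sin_sq, mul_zero, mul_one, Real.sin_zero, Real.sin_pi, smul_eq_mul]
  field_simp
  ring

lemma continuous_Rker (k : T2) : Continuous (Rker k) := by
  unfold Rker; have := continuous_sin2; fun_prop

lemma integral_Rker (k : T2) : ∫ k', Rker k k' = Phi k := by
  have h₁ : Integrable fun k' : T2 => sin2 k'.1 :=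
    (continuous_sin2.comp continuous_fst).integrable_of_hasCompactSupport
      (HasCompactSupport.of_compactSpace _)
  have h₂ : Integrable fun k' : T2 => sin2 k'.2 :=
    (continuous_sin2.comp continuous_snd).integrable_of_hasCompactSupport
      (HasCompactSupport.of_compactSpace _)
  simp only [Rker]
  rw [integral_const_mul, integral_add (h₁.const_mul _) (h₂.const_mul _), integral_const_mul,
    integral_const_mul, Measure.volume_eq_prod, integral_fun_fst, integral_fun_snd,
    integral_sin2]
  simp only [measureReal_def, AddCircle.measure_univ, ENNReal.toReal_ofReal zero_le_one,
    one_smul, Phi]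
  ring

lemma Pker_univ_le_one (k : T2) : Pker k univ ≤ 1 := by
  have hint : Integrable (fun k' => (Phi k)⁻¹ * Rker k k') :=
    ((continuous_Rker k).integrable_of_hasCompactSupport
      (HasCompactSupport.of_compactSpace _)).const_mul _
  have hnn : 0 ≤ᵐ[volume] fun k' => (Phi k)⁻¹ * Rker k k' := ae_of_all _ fun k' =>
    mul_nonneg (inv_nonneg.mpr (Phi_nonneg k)) (Rker_nonneg k k')
  rw [Pker, withDensity_apply _ MeasurableSet.univ, Measure.restrict_univ,
    ← ofReal_integral_eq_lintegral_ofReal hint hnn, integral_const_mul, integral_Rker]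
  exact ENNReal.ofReal_le_one.mpr (inv_mul_le_one_of_le₀ le_rfl (Phi_nonneg k))

lemma Pn_univ_le_one (m : ℕ) (k : T2) : Pn m k univ ≤ 1 := by
  induction m with
  | zero => simp [Pn]
  | succ m ih =>
    calc Pn (m + 1) k univ ≤ ∫⁻ q, Pker q univ ∂(Pn m k) :=
          Measure.bind_apply_le _ MeasurableSet.univ
      _ ≤ ∫⁻ _, 1 ∂(Pn m k) := lintegral_mono Pker_univ_le_one
      _ ≤ 1 := by rwa [lintegral_one]

lemma Pker_le_two_smul_piM (k : T2) : Pker k ≤ (2 : ℝ≥0∞) • piM := by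
  rw [piM, ← withDensity_smul' _ _ ENNReal.ofNat_ne_top]
  refine withDensity_mono (ae_of_all _ fun k' => ?_)
  rw [Pi.smul_apply, smul_eq_mul, ← ENNReal.ofReal_ofNat, ← ENNReal.ofReal_mul (by norm_num)]
  refine ENNReal.ofReal_le_ofReal ?_
  rcases (Phi_nonneg k).eq_or_lt with h | h
  · rw [← h, inv_zero, zero_mul]
    exact mul_nonneg (by norm_num) (mul_nonneg (by norm_num) (Phi_nonneg k'))
  · rw [inv_mul_le_iff₀ h]
    linarith [Rker_le k k']

lemma Pn_le_two_smul_piM {m : ℕ} (hm : 1 ≤ m) (k : T2) : Pn m k ≤ (2 : ℝ≥0∞) • piM := by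
  obtain ⟨m, rfl⟩ := Nat.exists_eq_add_of_le' hm
  exact Measure.bind_le_of_forall_le (Pn_univ_le_one m k) Pker_le_two_smul_piM

lemma integral_mul_exp_neg_half : ∫ z in Ioi (0 : ℝ), z * Real.exp (-(z / 2)) = 4 := by
  have h := Real.integral_rpow_mul_exp_neg_mul_Ioi (a := 2) (r := 1 / 2) two_pos (by norm_num)
  norm_num [Real.Gamma_two] at h
  rw [← h]
  refine setIntegral_congr_fun measurableSet_Ioi fun z _ => ?_
  ring_nf

lemma setIntegral_tail_nonneg {a : ℝ} (ha : 0 ≤ a) (c : ℝ) :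
    0 ≤ ∫ z in Ioi 0, Real.exp (-z) * z * a * (if c < z * a then 1 else 0) :=
  setIntegral_nonneg measurableSet_Ioi fun z (hz : 0 < z) => by split_ifs <;> positivity

lemma setIntegral_tail_le {a b : ℝ} (ha : 0 ≤ a) (hb : 0 ≤ b) (hab : a * b ≤ 1) (c : ℝ) :
    ∫ z in Ioi 0, Real.exp (-z) * z * a * (if c < z * a then 1 else 0)
      ≤ 4 * a * Real.exp (-(c * b / 2)) := by
  have hint : IntegrableOn (fun z => z * Real.exp (-(z / 2))) (Ioi 0) :=
    .of_integral_ne_zero (by rw [integral_mul_exp_neg_half]; norm_num)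
  calc _ ≤ ∫ z in Ioi 0, a * Real.exp (-(c * b / 2)) * (z * Real.exp (-(z / 2))) := by
        refine integral_mono_of_nonneg
          (ae_restrict_of_forall_mem measurableSet_Ioi fun z (hz : 0 < z) => ?_)
          (hint.const_mul _) (ae_restrict_of_forall_mem measurableSet_Ioi fun z (hz : 0 < z) => ?_)
        · dsimp only [Pi.zero_apply]; split_ifs <;> positivity
        dsimp only
        split_ifs with h
        · -- Chernoff: on the event, `c b ≤ z a b ≤ z`, so `e^{-z} ≤ e^{-c b/2} e^{-z/2}`
          have hcb : c * b ≤ z := by nlinarith [mul_le_mul_of_nonneg_right h.le hb]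
          have hsplit : Real.exp (-z) = Real.exp (-(z / 2)) * Real.exp (-(z / 2)) := by
            rw [← Real.exp_add]; ring_nf
          have hexp : Real.exp (-(z / 2)) ≤ Real.exp (-(c * b / 2)) :=
            Real.exp_le_exp.mpr (by linarith)
          rw [hsplit]
          calc Real.exp (-(z / 2)) * Real.exp (-(z / 2)) * z * a * 1
              = Real.exp (-(z / 2)) * (a * (z * Real.exp (-(z / 2)))) := by ring
            _ ≤ Real.exp (-(c * b / 2)) * (a * (z * Real.exp (-(z / 2)))) := by gcongr
            _ = _ := by ring
        · rw [mul_zero]; positivity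
    _ = 4 * a * Real.exp (-(c * b / 2)) := by
        rw [integral_const_mul, integral_mul_exp_neg_half]; ring

lemma four_mul_sq_le_sin_sq {x : ℝ} (hx : |x| ≤ 1 / 2) : 4 * x ^ 2 ≤ Real.sin (π * x) ^ 2 := by
  have h := Real.mul_abs_le_abs_sin (x := π * x)
    (by rw [abs_mul, abs_of_pos Real.pi_pos]; nlinarith [Real.pi_pos])
  rw [abs_mul, abs_of_pos Real.pi_pos, ← mul_assoc, div_mul_cancel₀ _ Real.pi_ne_zero] at h
  calc 4 * x ^ 2 = (2 * |x|) ^ 2 := by rw [mul_pow, sq_abs]; norm_num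
    _ ≤ |Real.sin (π * x)| ^ 2 := by gcongr
    _ = Real.sin (π * x) ^ 2 := sq_abs _

lemma lintegral_exp_neg_mul_sin2_le {t : ℝ} (ht : 0 < t) :
    ∫⁻ x : Torus, ENNReal.ofReal (Real.exp (-(t * sin2 x)))
      ≤ ENNReal.ofReal √(π / (4 * t)) := by
  rw [← AddCircle.lintegral_preimage 1 (-(1 / 2)), ← integral_gaussian,
    ofReal_integral_eq_lintegral_ofReal (integrable_exp_neg_mul_sq (by positivity))
      (ae_of_all _ fun _ => (Real.exp_pos _).le)]
  refine (setLIntegral_mono (by fun_prop) fun x hx => ?_).trans (setLIntegral_le_lintegral _ _)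
  refine ENNReal.ofReal_le_ofReal (Real.exp_le_exp.mpr ?_)
  have hx' : |x| ≤ 1 / 2 := abs_le.mpr ⟨hx.1.le, by linarith [hx.2]⟩
  rw [sin2_coe]
  nlinarith [four_mul_sq_le_sin_sq hx']

lemma lintegral_exp_neg_mul_Phi_le {c : ℝ} (hc : 0 < c) :
    ∫⁻ k : T2, ENNReal.ofReal (Real.exp (-(c * Phi k / 2))) ≤ ENNReal.ofReal (π / (16 * c)) := by
  have hsplit : ∀ k : T2, ENNReal.ofReal (Real.exp (-(c * Phi k / 2)))
      = ENNReal.ofReal (Real.exp (-(4 * c * sin2 k.1)))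
        * ENNReal.ofReal (Real.exp (-(4 * c * sin2 k.2))) := fun k => by
    rw [← ENNReal.ofReal_mul (Real.exp_pos _).le, ← Real.exp_add, Phi]
    ring_nf
  have hmeas : Measurable fun x : Torus => ENNReal.ofReal (Real.exp (-(4 * c * sin2 x))) := by
    have := continuous_sin2.measurable; fun_prop
  have h := lintegral_exp_neg_mul_sin2_le (t := 4 * c) (by positivity)
  rw [show 4 * (4 * c) = 16 * c by ring] at h
  simp_rw [hsplit]
  rw [Measure.volume_eq_prod, lintegral_prod_mul hmeas.aemeasurable hmeas.aemeasurable,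
    ← Real.mul_self_sqrt (by positivity : 0 ≤ π / (16 * c)),
    ENNReal.ofReal_mul (Real.sqrt_nonneg _)]
  exact mul_le_mul' h h

def tailMajorant (c : ℝ) (α : Fin 2) (k : T2) : ℝ :=
  4 * |psiC α k| * Real.exp (-(c * Phi k / 2))

lemma tailMajorant_nonneg (c : ℝ) (α : Fin 2) (k : T2) : 0 ≤ tailMajorant c α k := by
  unfold tailMajorant; positivity

lemma measurable_tailMajorant (c : ℝ) (α : Fin 2) : Measurable (tailMajorant c α) := by
  have := measurable_psiC α; have := continuous_Phi.measurable
  unfold tailMajorant; fun_prop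

lemma lintegral_tailMajorant_Pn_le {c : ℝ} (hc : 0 < c) (α : Fin 2) {m : ℕ} (hm : 1 ≤ m)
    (k : T2) :
    ∫⁻ k', ENNReal.ofReal (tailMajorant c α k') ∂(Pn m k) ≤ ENNReal.ofReal (π / (16 * c)) := by
  have hG := (measurable_tailMajorant c α).ennreal_ofReal
  calc _ ≤ ∫⁻ k', ENNReal.ofReal (tailMajorant c α k') ∂((2 : ℝ≥0∞) • piM) :=
        lintegral_mono' (Pn_le_two_smul_piM hm k) le_rfl
    _ = ∫⁻ k', 2 * (ENNReal.ofReal (1 / 8 * Phi k') * ENNReal.ofReal (tailMajorant c α k')) := by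
        rw [lintegral_smul_measure, piM, lintegral_withDensity_eq_lintegral_mul _ (by
          have := continuous_Phi.measurable; fun_prop) hG,
          lintegral_const_mul' _ _ ENNReal.ofNat_ne_top]
        rfl
    _ ≤ ∫⁻ k', ENNReal.ofReal (Real.exp (-(c * Phi k' / 2))) := lintegral_mono fun k' => by
        rw [← ENNReal.ofReal_mul (by linarith [Phi_nonneg k']), ← ENNReal.ofReal_ofNat,
          ← ENNReal.ofReal_mul (by norm_num)]
        refine ENNReal.ofReal_le_ofReal ?_
        have := Phi_mul_abs_psiC_le_one α k'
        unfold tailMajorant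
        nlinarith [Real.exp_pos (-(c * Phi k' / 2))]
    _ ≤ ENNReal.ofReal (π / (16 * c)) := lintegral_exp_neg_mul_Phi_le hc

/-- There is a constant `C₀ < ∞` such that for every `N ≥ 2`, `α`,
`m ≥ 1` and `k ∈ 𝕋²`,
`∫ Pᵐ(k,dk') ∫_0^∞ e^{-z} z |ψ^α(k')| 𝟙{z|ψ^α(k')| > √N} dz ≤ C₀/√N`. -/
theorem truncated_tail_bound :
    ∃ C₀ : ℝ, 0 ≤ C₀ ∧ ∀ (N : ℕ), 2 ≤ N → ∀ (α : Fin 2) (m : ℕ), 1 ≤ m → ∀ k : T2,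
      (∫ k', (∫ z in Set.Ioi (0:ℝ),
          Real.exp (-z) * z * |psiC α k'| *
            (if Real.sqrt N < z * |psiC α k'| then 1 else 0)) ∂(Pn m k))
        ≤ C₀ / Real.sqrt N := by
  refine ⟨1, zero_le_one, fun N hN α m hm k => ?_⟩
  have hc : 0 < √(N : ℝ) := Real.sqrt_pos.mpr (by exact_mod_cast (by omega : 0 < N))
  have hG := lintegral_tailMajorant_Pn_le hc α hm k
  have hGm := (measurable_tailMajorant √N α).aestronglyMeasurable (μ := Pn m k)
  have hG₀ : 0 ≤ᵐ[Pn m k] tailMajorant √N α := ae_of_all _ (tailMajorant_nonneg _ α)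
  calc _ ≤ ∫ k', tailMajorant √N α k' ∂(Pn m k) :=
        integral_mono_of_nonneg (ae_of_all _ fun k' => setIntegral_tail_nonneg (abs_nonneg _) _)
          (.of_lintegral_ofReal_le hGm hG₀ hG) (ae_of_all _ fun k' =>
            setIntegral_tail_le (abs_nonneg _) (Phi_nonneg k')
              ((mul_comm _ _).trans_le (Phi_mul_abs_psiC_le_one α k')) _)
    _ ≤ π / (16 * √N) := integral_le_of_lintegral_ofReal_le hGm hG₀ (by positivity) hG
    _ ≤ 1 / √N := by
        rw [div_le_div_iff₀ (by positivity) hc]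
        nlinarith [Real.pi_le_four]

end
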